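/- arXiv:1710.03546 — 3 statements merged into one kernel-verified Lean document; each statement's English description precedes it below -/
import Mathlib

section
/- If f ∈ W^{1,1}(ℝ) and a sequence f_j ∈ W^{1,1}(ℝ) satisfies ‖f_j − f‖_{W^{1,1}(ℝ)} → 0 as j → ∞, then ‖|f_j| − |f|‖_{W^{1,1}(ℝ)} → 0 as j → ∞. -/
open MeasureTheory Filter Topology Set

/-- `f` is a `W^{1,1}(ℝ)` function with weak derivative `f'` (absolutely continuous
representative with integrable derivative). -/
def W11 (f f' : ℝ → ℝ) : Prop :=
  MeasureTheory.Integrable f ∧ MeasureTheory.Integrable f' ∧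
    ∀ x : ℝ, f x = f 0 + ∫ t in (0:ℝ)..x, f' t

/-- The `W^{1,1}` norm of `f` (with weak derivative `f'`). -/
noncomputable def W11Norm (f f' : ℝ → ℝ) : ℝ :=
  (∫ x : ℝ, |f x|) + ∫ x : ℝ, |f' x|

/-- The non-centered fractional maximal operator of order `β`. -/
noncomputable def MB (β : ℝ) (f : ℝ → ℝ) (x : ℝ) : ℝ :=
  sSup {c : ℝ | ∃ z r : ℝ, 0 < r ∧ x ∈ Set.Icc (z - r) (z + r) ∧
    c = r ^ β * ((2 * r)⁻¹ * ∫ y in Set.Icc (z - r) (z + r), |f y|)}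

/-- `Icc (z - r) (z + r)` is a good ball for `f` at `x`. -/
def GoodBall (β : ℝ) (f : ℝ → ℝ) (x z r : ℝ) : Prop :=
  0 < r ∧ x ∈ Set.Icc (z - r) (z + r) ∧
    MB β f x = r ^ β * ((2 * r)⁻¹ * ∫ y in Set.Icc (z - r) (z + r), |f y|)

/-! Where `f ≠ 0`, `|f|' = sign f · f'`, and almost everywhere on `{f = 0}` both `|f|'` and `f'`
vanish (a point of the zero set that is not isolated in it forces a zero derivative, and the
isolated ones are countably many). Hence
`|(|fⱼ|)' - |f|'| ≤ |fⱼ' - f'| + |sign fⱼ - sign f| · |f'|` a.e. The last term is dominated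
by `2 |f'|`, and along any subsequence on which `fⱼ → f` a.e. it tends to `0` pointwise: off
`{f = 0}` the sign is eventually constant, on it `f' = 0`. -/

namespace Real

theorem measurable_sign : Measurable Real.sign :=
  Measurable.ite measurableSet_Iio measurable_const
    (Measurable.ite measurableSet_Ioi measurable_const measurable_const)

theorem abs_sign_le_one (r : ℝ) : |Real.sign r| ≤ 1 := by
  rcases sign_apply_eq r with h | h | h <;> simp [h]

theorem abs_sign_sub_sign_le_two (a b : ℝ) : |Real.sign a - Real.sign b| ≤ 2 :=
  (abs_sub _ _).trans (by linarith [abs_sign_le_one a, abs_sign_le_one b])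

theorem continuousAt_sign_of_ne_zero {x : ℝ} (hx : x ≠ 0) : ContinuousAt Real.sign x := by
  rcases hx.lt_or_gt with h | h
  · exact continuousAt_const.congr_of_eventuallyEq
      ((eventually_lt_nhds h).mono fun y hy => sign_of_neg hy)
  · exact continuousAt_const.congr_of_eventuallyEq
      ((eventually_gt_nhds h).mono fun y hy => sign_of_pos hy)

theorem abs_sign_mul_sub_sign_mul_le (a b c d : ℝ) :
    |Real.sign a * b - Real.sign c * d| ≤ |b - d| + |Real.sign a - Real.sign c| * |d| :=
  calc |Real.sign a * b - Real.sign c * d|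
      = |Real.sign a * (b - d) + (Real.sign a - Real.sign c) * d| := by ring_nf
    _ ≤ |Real.sign a| * |b - d| + |Real.sign a - Real.sign c| * |d| := by
      rw [← abs_mul, ← abs_mul]; exact abs_add_le _ _
    _ ≤ |b - d| + |Real.sign a - Real.sign c| * |d| := by
      gcongr; exact mul_le_of_le_one_left (abs_nonneg _) (abs_sign_le_one a)

end Real

theorem HasDerivAt.eq_sign_mul_of_hasDerivAt_abs {f : ℝ → ℝ} {f' F' x : ℝ}
    (hf : HasDerivAt f f' x) (hF : HasDerivAt (fun y => |f y|) F' x) :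
    F' = Real.sign (f x) * f' := by
  rcases lt_trichotomy (f x) 0 with h | h | h
  · rw [hF.unique (by simpa [Function.comp_def] using (hasDerivAt_abs_neg h).comp x hf),
      Real.sign_of_neg h, neg_one_mul]
  · rw [h, Real.sign_zero, zero_mul]
    exact IsLocalMin.hasDerivAt_eq_zero (Eventually.of_forall fun y => by simp [h]) hF
  · rw [hF.unique (by simpa [Function.comp_def] using (hasDerivAt_abs_pos h).comp x hf),
      Real.sign_of_pos h, one_mul]

theorem countable_setOf_not_accPt {α : Type*} [LinearOrder α] [TopologicalSpace α]
    [OrderTopology α] [SecondCountableTopology α] (s : Set α) :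
    {x ∈ s | ¬AccPt x (𝓟 s)}.Countable :=
  countable_setOfPred_isolated_right_within.mono fun x ⟨hxs, hx⟩ => by
    rw [accPt_principal_iff_nhdsWithin, not_neBot] at hx
    exact ⟨hxs, le_bot_iff.1 <| hx ▸ nhdsWithin_mono x fun y hy => ⟨hy.1, hy.2.ne'⟩⟩

theorem ae_hasDerivAt_eq_zero_of_eqOn_const {E : Type*} [NormedAddCommGroup E]
    [NormedSpace ℝ E] {f : ℝ → E} {s : Set ℝ} {c : E} (hs : EqOn f (fun _ => c) s) :
    ∀ᵐ x, x ∈ s → ∀ f', HasDerivAt f f' x → f' = 0 := by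
  filter_upwards [(countable_setOf_not_accPt s).ae_notMem volume] with x hx hxs f' hf'
  have hacc : AccPt x (𝓟 s) := by_contra fun h => hx ⟨hxs, h⟩
  exact hacc.uniqueDiffWithinAt.eq_deriv s hf'.hasDerivWithinAt
    ((hasDerivWithinAt_const x s c).congr hs (hs hxs))


section SignConvergence

variable {α : Type*} [MeasurableSpace α] {μ : Measure α}

theorem tendstoInMeasure_of_tendsto_integral_norm_sub {ι E : Type*} [NormedAddCommGroup E]
    {l : Filter ι} {f : ι → α → E} {g : α → E} (hf : ∀ i, Integrable (f i) μ)
    (hg : Integrable g μ) (h : Tendsto (fun i => ∫ x, ‖f i x - g x‖ ∂μ) l (𝓝 0)) :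
    TendstoInMeasure μ f l g := by
  refine tendstoInMeasure_of_tendsto_eLpNorm one_ne_zero (fun i => (hf i).aestronglyMeasurable)
    hg.aestronglyMeasurable ?_
  have heq (i : ι) : eLpNorm (f i - g) 1 μ = ENNReal.ofReal (∫ x, ‖f i x - g x‖ ∂μ) := by
    rw [eLpNorm_one_eq_lintegral_enorm]
    exact (ofReal_integral_norm_eq_lintegral_enorm ((hf i).sub hg)).symm
  simpa [heq, Function.comp_def] using (ENNReal.continuous_ofReal.tendsto 0).comp h

theorem integrable_abs_sign_sub_sign_mul {g₁ g₂ h : α → ℝ} (hg₁ : AEMeasurable g₁ μ)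
    (hg₂ : AEMeasurable g₂ μ) (hh : Integrable h μ) :
    Integrable (fun x => |Real.sign (g₁ x) - Real.sign (g₂ x)| * |h x|) μ :=
  hh.abs.bdd_mul ((Real.measurable_sign.comp_aemeasurable hg₁).sub
      (Real.measurable_sign.comp_aemeasurable hg₂)).abs.aestronglyMeasurable
    (ae_of_all _ fun x => by simpa using Real.abs_sign_sub_sign_le_two (g₁ x) (g₂ x))

theorem tendsto_integral_abs_sign_sub_sign_mul {g : ℕ → α → ℝ} {g₀ h : α → ℝ}
    (hg : ∀ n, AEMeasurable (g n) μ) (hconv : TendstoInMeasure μ g atTop g₀) (hh : Integrable h μ)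
    (hzero : ∀ᵐ x ∂μ, g₀ x = 0 → h x = 0) :
    Tendsto (fun n => ∫ x, |Real.sign (g n x) - Real.sign (g₀ x)| * |h x| ∂μ) atTop (𝓝 0) := by
  refine tendsto_of_subseq_tendsto fun ns hns => ?_
  obtain ⟨ms, -, hae⟩ := (hconv.comp hns).exists_seq_tendsto_ae
  refine ⟨ms, ?_⟩
  have hlim : ∀ᵐ x ∂μ, Tendsto (fun k =>
      |Real.sign (g (ns (ms k)) x) - Real.sign (g₀ x)| * |h x|) atTop (𝓝 0) := by
    filter_upwards [hae, hzero] with x hx hx₀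
    by_cases h₀ : g₀ x = 0
    · simp [hx₀ h₀]
    · simpa using ((((Real.continuousAt_sign_of_ne_zero h₀).tendsto.comp hx).sub_const
        (Real.sign (g₀ x))).abs.mul_const |h x|)
  have hbound (n : ℕ) : ∀ x, ‖|Real.sign (g n x) - Real.sign (g₀ x)| * |h x|‖ ≤ 2 * |h x| := by
    intro x
    rw [Real.norm_eq_abs, abs_mul, abs_abs, abs_abs]
    exact mul_le_mul_of_nonneg_right (Real.abs_sign_sub_sign_le_two _ _) (abs_nonneg _)
  simpa using tendsto_integral_of_dominated_convergence (fun x => 2 * |h x|)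
    (fun k =>
      (integrable_abs_sign_sub_sign_mul (hg _) (hconv.aemeasurable hg) hh).aestronglyMeasurable)
    (hh.abs.const_mul 2) (fun k => ae_of_all _ (hbound _)) hlim

end SignConvergence

namespace W11

variable {f f' F' : ℝ → ℝ}

theorem ae_hasDerivAt (hf : W11 f f') : ∀ᵐ x, HasDerivAt f (f' x) x := by
  obtain ⟨-, hf', hrep⟩ := hf
  filter_upwards [LocallyIntegrable.ae_hasDerivAt_integral hf'.locallyIntegrable] with x hx
  exact ((hx 0).const_add (f 0)).congr_of_eventuallyEq (Eventually.of_forall hrep)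

theorem ae_eq_zero_of_eq_zero (hf : W11 f f') : ∀ᵐ x, f x = 0 → f' x = 0 := by
  filter_upwards [ae_hasDerivAt_eq_zero_of_eqOn_const (s := {x | f x = 0}) fun _ hx => hx,
    hf.ae_hasDerivAt] with x hzero hderiv hx using hzero hx _ hderiv

theorem ae_eq_sign_mul_of_abs (hf : W11 f f') (hF : W11 (fun x => |f x|) F') :
    ∀ᵐ x, F' x = Real.sign (f x) * f' x := by
  filter_upwards [hf.ae_hasDerivAt, hF.ae_hasDerivAt] with x hfx hFx
  exact hfx.eq_sign_mul_of_hasDerivAt_abs hFx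

theorem integral_abs_sub_deriv_abs_le {g g' G' : ℝ → ℝ} (hg : W11 g g') (hf : W11 f f')
    (hG : W11 (fun x => |g x|) G') (hF : W11 (fun x => |f x|) F') :
    ∫ x, |G' x - F' x| ≤
      (∫ x, |g' x - f' x|) + ∫ x, |Real.sign (g x) - Real.sign (f x)| * |f' x| := by
  have hderiv_int : Integrable (fun x => |g' x - f' x|) := (hg.2.1.sub hf.2.1).abs
  have hsign_int := integrable_abs_sign_sub_sign_mul hg.1.aemeasurable hf.1.aemeasurable hf.2.1
  refine (integral_mono_ae (hG.2.1.sub hF.2.1).abs (hderiv_int.add hsign_int) ?_).trans_eq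
    (integral_add hderiv_int hsign_int)
  filter_upwards [hg.ae_eq_sign_mul_of_abs hG, hf.ae_eq_sign_mul_of_abs hF] with x hgx hfx
  simp only [Pi.sub_apply, Pi.add_apply, hgx, hfx]
  exact Real.abs_sign_mul_sub_sign_mul_le _ _ _ _

end W11

theorem tendsto_W11Norm_nhds_zero_iff {ι : Type*} {l : Filter ι} {u v : ι → ℝ → ℝ} :
    Tendsto (fun i => W11Norm (u i) (v i)) l (𝓝 0) ↔
      Tendsto (fun i => ∫ x, |u i x|) l (𝓝 0) ∧ Tendsto (fun i => ∫ x, |v i x|) l (𝓝 0) := by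
  have hu (i : ι) : 0 ≤ ∫ x, |u i x| := integral_nonneg fun x => abs_nonneg _
  have hv (i : ι) : 0 ≤ ∫ x, |v i x| := integral_nonneg fun x => abs_nonneg _
  refine ⟨fun h => ⟨squeeze_zero hu (fun i => le_add_of_nonneg_right (hv i)) h,
    squeeze_zero hv (fun i => le_add_of_nonneg_left (hu i)) h⟩, fun ⟨hu', hv'⟩ => ?_⟩
  simpa [W11Norm] using hu'.add hv'

theorem statement0
    (f f' F' : ℝ → ℝ) (fj fj' Fj' : ℕ → ℝ → ℝ)
    (hf : W11 f f') (hfj : ∀ j, W11 (fj j) (fj' j))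
    (hF : W11 (fun x => |f x|) F')
    (hFj : ∀ j, W11 (fun x => |fj j x|) (Fj' j))
    (hconv : Tendsto (fun j => W11Norm (fun x => fj j x - f x) (fun x => fj' j x - f' x))
      atTop (𝓝 0)) :
    Tendsto (fun j => W11Norm (fun x => |fj j x| - |f x|) (fun x => Fj' j x - F' x))
      atTop (𝓝 0) := by
  obtain ⟨hL1, hL1'⟩ := tendsto_W11Norm_nhds_zero_iff.1 hconv
  have hmeas : TendstoInMeasure volume fj atTop f :=
    tendstoInMeasure_of_tendsto_integral_norm_sub (fun j => (hfj j).1) hf.1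
      (by simpa only [Real.norm_eq_abs] using hL1)
  have hsign := tendsto_integral_abs_sign_sub_sign_mul (fun j => (hfj j).1.aemeasurable) hmeas
    hf.2.1 hf.ae_eq_zero_of_eq_zero
  refine tendsto_W11Norm_nhds_zero_iff.2 ⟨?_, ?_⟩
  · refine squeeze_zero (fun j => integral_nonneg fun x => abs_nonneg _) (fun j => ?_) hL1
    exact integral_mono ((hFj j).1.sub hF.1).abs ((hfj j).1.sub hf.1).abs
      fun x => abs_abs_sub_abs_le_abs_sub _ _
  · exact squeeze_zero (fun j => integral_nonneg fun x => abs_nonneg _)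
      (fun j => (hfj j).integral_abs_sub_deriv_abs_le hf (hFj j) hF) (by simpa using hL1'.add hsign)
end

section
/- Let 0 < β < 1 and f ∈ W^{1,1}(ℝ). For almost every x ∈ ℝ, if B_x is an interval of radius r_x containing x realizing the supremum in the definition of M̃_β f(x) (a good ball), then the derivative of M̃_β f at x equals (M̃_β f)'(x) = r_x^β · (1/(2 r_x)) ∫_{B_x} (|f|)'(y) dy. -/
/-!
If `f` is bounded by `K`, a ball with `r ^ β ⨍ |f| > λ` has radius at least
`(λ / K) ^ (1 / β)`, and translating a ball of radius `r` by `h` changes `r ^ β ⨍ |f|` by at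
most `r ^ (β - 1) K |h|`. Hence `max λ (M̃_β f)` is Lipschitz for every `λ > 0`, and since
`M̃_β f > 0` everywhere unless `f = 0`, Rademacher's theorem makes `M̃_β f` differentiable
almost everywhere.

At such a point `x`, with good ball `[z - r, z + r]`, the translates `[z - r, z + r] + (t - x)`
contain `t`, so `t ↦ r ^ β ⨍_{[z - r, z + r] + (t - x)} |f|` is a differentiable minorant of
`M̃_β f` touching it at `x`. The two derivatives at `x` therefore agree, and the derivative of
the translated average is
`r ^ β (|f (z + r)| - |f (z - r)|) / (2 r) = r ^ β ⨍_{[z - r, z + r]} |f|'`.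
-/

open MeasureTheory Filter Topology Set

theorem HasDerivAt.eq_of_eventually_le_of_eq {g F : ℝ → ℝ} {g' F' x : ℝ}
    (hF : HasDerivAt F F' x) (hg : HasDerivAt g g' x) (hle : ∀ᶠ t in 𝓝 x, g t ≤ F t)
    (heq : g x = F x) : F' = g' := by
  have hmin : IsLocalMin (fun t => F t - g t) x :=
    hle.mono fun t ht => by simp only [heq, sub_self, sub_nonneg, ht]
  exact sub_eq_zero.mp (hmin.hasDerivAt_eq_zero (hF.sub hg))

theorem integral_Icc_eq_intervalIntegral {g : ℝ → ℝ} {a b : ℝ} (hab : a ≤ b) :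
    ∫ y in Icc a b, g y = ∫ y in a..b, g y := by
  rw [integral_Icc_eq_integral_Ioc, intervalIntegral.integral_of_le hab]

namespace W11

variable {f f' : ℝ → ℝ}

theorem continuous (hf : W11 f f') : Continuous f := by
  rw [funext hf.2.2]
  exact continuous_const.add (hf.2.1.continuous_primitive 0)

theorem integral_Icc_eq_sub (hf : W11 f f') {a b : ℝ} (hab : a ≤ b) :
    ∫ y in Icc a b, f' y = f b - f a := by
  rw [integral_Icc_eq_intervalIntegral hab, hf.2.2 a, hf.2.2 b,
    ← intervalIntegral.integral_interval_sub_left hf.2.1.intervalIntegrable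
      hf.2.1.intervalIntegrable]
  ring

theorem exists_abs_le (hf : W11 f f') : ∃ K, 0 < K ∧ ∀ y, |f y| ≤ K := by
  have hint : 0 ≤ ∫ t, |f' t| := integral_nonneg fun _ => abs_nonneg _
  refine ⟨1 + |f 0| + ∫ t, |f' t|, by positivity, fun y => ?_⟩
  have hprim : |∫ t in (0 : ℝ)..y, f' t| ≤ ∫ t, |f' t| :=
    intervalIntegral.norm_integral_le_integral_norm_uIoc.trans
      (setIntegral_le_integral hf.2.1.norm (Eventually.of_forall fun _ => norm_nonneg _))
  rw [hf.2.2 y]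
  have := abs_add_le (f 0) (∫ t in (0 : ℝ)..y, f' t)
  linarith

end W11

section FractionalMaximal

variable {β K lam r z : ℝ} {f : ℝ → ℝ}

noncomputable def fracAvg (β : ℝ) (f : ℝ → ℝ) (z r : ℝ) : ℝ :=
  r ^ β * ((2 * r)⁻¹ * ∫ y in Icc (z - r) (z + r), |f y|)

def fracAvgSet (β : ℝ) (f : ℝ → ℝ) (x : ℝ) : Set ℝ :=
  {c | ∃ z r : ℝ, 0 < r ∧ x ∈ Icc (z - r) (z + r) ∧ c = fracAvg β f z r}

theorem MB_eq_sSup (x : ℝ) : MB β f x = sSup (fracAvgSet β f x) := rfl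

theorem fracAvg_le_MB {x : ℝ} (hbdd : BddAbove (fracAvgSet β f x)) (hr : 0 < r)
    (hx : x ∈ Icc (z - r) (z + r)) : fracAvg β f z r ≤ MB β f x :=
  le_csSup hbdd ⟨z, r, hr, hx, rfl⟩

theorem exists_lt_fracAvg_of_lt_MB {x c : ℝ} (hc : c < MB β f x) :
    ∃ z r, 0 < r ∧ x ∈ Icc (z - r) (z + r) ∧ c < fracAvg β f z r := by
  have hne : (fracAvgSet β f x).Nonempty := ⟨_, x, 1, one_pos, by simp, rfl⟩
  obtain ⟨_, ⟨z, r, hr, hx, rfl⟩, hlt⟩ := exists_lt_of_lt_csSup hne hc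
  exact ⟨z, r, hr, hx, hlt⟩

theorem fracAvg_eq (hr : 0 < r) :
    fracAvg β f z r = r ^ (β - 1) / 2 * ∫ y in (z - r)..(z + r), |f y| := by
  rw [fracAvg, integral_Icc_eq_intervalIntegral (by linarith), ← mul_assoc, Real.rpow_sub hr,
    Real.rpow_one, mul_inv]
  ring

theorem fracAvg_le_rpow_mul (hK : ∀ y, |f y| ≤ K) (hr : 0 < r) :
    fracAvg β f z r ≤ r ^ β * K := by
  have hI : ∫ y in (z - r)..(z + r), |f y| ≤ K * (2 * r) := by
    have := intervalIntegral.norm_integral_le_of_norm_le_const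
      (a := z - r) (b := z + r) (f := fun y => |f y|) (C := K) fun y _ => by simpa using hK y
    rwa [Real.norm_eq_abs, abs_of_nonneg (intervalIntegral.integral_nonneg (by linarith)
      fun _ _ => abs_nonneg _), show z + r - (z - r) = 2 * r by ring,
      abs_of_pos (by linarith)] at this
  calc fracAvg β f z r ≤ r ^ (β - 1) / 2 * (K * (2 * r)) := by
        rw [fracAvg_eq hr]; gcongr
    _ = r ^ β * K := by
        rw [Real.rpow_sub hr, Real.rpow_one]; field_simp

theorem fracAvg_le_rpow_sub_one_mul (hf : Integrable f) (hr : 0 < r) :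
    fracAvg β f z r ≤ r ^ (β - 1) / 2 * ∫ y, |f y| := by
  rw [fracAvg_eq hr, ← integral_Icc_eq_intervalIntegral (by linarith)]
  exact mul_le_mul_of_nonneg_left
    (setIntegral_le_integral hf.abs (Eventually.of_forall fun _ => abs_nonneg _)) (by positivity)

theorem bddAbove_fracAvgSet (hf : Integrable f) (hK : ∀ y, |f y| ≤ K) (hβ0 : 0 ≤ β)
    (hβ1 : β ≤ 1) (x : ℝ) : BddAbove (fracAvgSet β f x) := by
  have hK0 : 0 ≤ K := (abs_nonneg _).trans (hK 0)
  have hI : 0 ≤ ∫ y, |f y| := integral_nonneg fun _ => abs_nonneg _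
  refine ⟨K + (∫ y, |f y|) / 2, ?_⟩
  rintro _ ⟨z, r, hr, -, rfl⟩
  rcases le_total r 1 with hr1 | hr1
  · calc fracAvg β f z r ≤ r ^ β * K := fracAvg_le_rpow_mul hK hr
      _ ≤ 1 * K := by gcongr; exact Real.rpow_le_one hr.le hr1 hβ0
      _ ≤ K + (∫ y, |f y|) / 2 := by linarith
  · calc fracAvg β f z r ≤ r ^ (β - 1) / 2 * ∫ y, |f y| := fracAvg_le_rpow_sub_one_mul hf hr
      _ ≤ 1 / 2 * ∫ y, |f y| := by
          gcongr; exact Real.rpow_le_one_of_one_le_of_nonpos hr1 (by linarith)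
      _ ≤ K + (∫ y, |f y|) / 2 := by linarith

theorem abs_fracAvg_add_sub_le (hf : Integrable f) (hK : ∀ y, |f y| ≤ K) (hr : 0 < r)
    (z h : ℝ) : |fracAvg β f (z + h) r - fracAvg β f z r| ≤ r ^ (β - 1) * K * |h| := by
  have hfi : ∀ a b : ℝ, IntervalIntegrable (fun y => |f y|) volume a b :=
    fun _ _ => hf.abs.intervalIntegrable
  have hend : ∀ a : ℝ, |(∫ y in a..(a + h), |f y|)| ≤ K * |h| := fun a => by
    simpa using intervalIntegral.norm_integral_le_of_norm_le_const
      (a := a) (b := a + h) (f := fun y => |f y|) (C := K) fun y _ => by simpa using hK y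
  have hdiff : fracAvg β f (z + h) r - fracAvg β f z r = r ^ (β - 1) / 2 *
      ((∫ y in (z + r)..(z + r + h), |f y|) - ∫ y in (z - r)..(z - r + h), |f y|) := by
    rw [fracAvg_eq hr, fracAvg_eq hr, ← mul_sub,
      intervalIntegral.integral_interval_sub_interval_comm' (hfi _ _) (hfi _ _) (hfi _ _)]
    ring_nf
  rw [hdiff, abs_mul, abs_of_nonneg (by positivity)]
  calc r ^ (β - 1) / 2 *
        |(∫ y in (z + r)..(z + r + h), |f y|) - (∫ y in (z - r)..(z - r + h), |f y|)|
      ≤ r ^ (β - 1) / 2 * (K * |h| + K * |h|) := by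
        gcongr; exact (abs_sub _ _).trans (add_le_add (hend _) (hend _))
    _ = r ^ (β - 1) * K * |h| := by ring

theorem rpow_inv_lt_of_lt_fracAvg (hK : ∀ y, |f y| ≤ K) (hK0 : 0 < K) (hβ : 0 < β)
    (hlam : 0 ≤ lam) (hr : 0 < r) (h : lam < fracAvg β f z r) : (lam / K) ^ β⁻¹ < r := by
  rw [Real.rpow_inv_lt_iff_of_pos (by positivity) hr.le hβ, div_lt_iff₀ hK0]
  exact h.trans_le (fracAvg_le_rpow_mul hK hr)

theorem exists_MB_sub_le (hf : Integrable f) (hK : ∀ y, |f y| ≤ K) (hK0 : 0 < K)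
    (hβ0 : 0 < β) (hβ1 : β ≤ 1) (hlam : 0 < lam) :
    ∃ C, 0 ≤ C ∧ ∀ x y, lam < MB β f x → MB β f x - C * |y - x| ≤ MB β f y := by
  set ρ := (lam / K) ^ β⁻¹
  have hρ : 0 < ρ := by positivity
  refine ⟨ρ ^ (β - 1) * K, by positivity, fun x y hx => ?_⟩
  rw [sub_le_iff_le_add]
  refine le_of_forall_lt fun c hc => ?_
  obtain ⟨z, r, hr, hxzr, hcr⟩ := exists_lt_fracAvg_of_lt_MB (max_lt hc hx)
  have hρr : ρ < r :=
    rpow_inv_lt_of_lt_fracAvg hK hK0 hβ0 hlam.le hr ((le_max_right _ _).trans_lt hcr)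
  have hshift := (abs_le.mp (abs_fracAvg_add_sub_le (β := β) hf hK hr z (y - x))).1
  have hy : fracAvg β f (z + (y - x)) r ≤ MB β f y :=
    fracAvg_le_MB (bddAbove_fracAvgSet hf hK hβ0.le hβ1 y) hr <| by
      constructor <;> linarith [hxzr.1, hxzr.2]
  have hrρ : r ^ (β - 1) ≤ ρ ^ (β - 1) :=
    Real.rpow_le_rpow_of_nonpos hρ hρr.le (by linarith)
  linarith [le_max_left c lam, mul_le_mul_of_nonneg_right hrρ (by positivity : 0 ≤ K * |y - x|)]

theorem exists_lipschitzWith_max_MB (hf : Integrable f) (hK : ∀ y, |f y| ≤ K) (hK0 : 0 < K)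
    (hβ0 : 0 < β) (hβ1 : β ≤ 1) (hlam : 0 < lam) :
    ∃ C, LipschitzWith C fun x => max lam (MB β f x) := by
  obtain ⟨C, hC0, hC⟩ := exists_MB_sub_le hf hK hK0 hβ0 hβ1 hlam
  have key : ∀ x y, max lam (MB β f x) - max lam (MB β f y) ≤ C * |x - y| := fun x y => by
    rcases le_or_gt (MB β f x) lam with hx | hx
    · rw [max_eq_left hx]
      linarith [le_max_left lam (MB β f y), mul_nonneg hC0 (abs_nonneg (x - y))]
    · rw [max_eq_right hx.le, abs_sub_comm]
      linarith [hC x y hx, le_max_right lam (MB β f y)]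
  refine ⟨C.toNNReal, LipschitzWith.of_dist_le_mul fun x y => ?_⟩
  rw [Real.dist_eq, Real.dist_eq, Real.coe_toNNReal _ hC0, abs_sub_le_iff]
  exact ⟨key x y, abs_sub_comm x y ▸ key y x⟩

theorem MB_zero (β x : ℝ) : MB β 0 x = 0 := by
  have hzero : ∀ c ∈ fracAvgSet β 0 x, c = 0 := by
    rintro _ ⟨z, r, -, -, rfl⟩
    simp [fracAvg]
  rw [MB_eq_sSup]
  exact le_antisymm (Real.sSup_nonpos fun c hc => (hzero c hc).le)
    (Real.sSup_nonneg fun c hc => (hzero c hc).ge)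

theorem MB_pos (hcont : Continuous f) {x y₀ : ℝ} (hbdd : BddAbove (fracAvgSet β f x))
    (hy₀ : f y₀ ≠ 0) : 0 < MB β f x := by
  set R := |x - y₀| + 1
  have hR : 0 < R := by positivity
  have hy₀R : y₀ ∈ Ioo (x - R) (x + R) := by
    constructor <;> linarith [le_abs_self (x - y₀), neg_abs_le (x - y₀)]
  have hI : 0 < ∫ y in Icc (x - R) (x + R), |f y| := by
    rw [setIntegral_pos_iff_support_of_nonneg_ae (Eventually.of_forall fun _ => abs_nonneg _)
      hcont.abs.integrableOn_Icc]
    refine lt_of_lt_of_le ?_ (measure_mono (inter_subset_inter_right _ Ioo_subset_Icc_self))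
    exact (hcont.abs.isOpen_support.inter isOpen_Ioo).measure_pos volume
      ⟨y₀, by simpa using hy₀, hy₀R⟩
  have hpos : 0 < fracAvg β f x R := by unfold fracAvg; positivity
  exact hpos.trans_le (fracAvg_le_MB hbdd hR ⟨by linarith, by linarith⟩)

theorem ae_differentiableAt_MB (hcont : Continuous f) (hf : Integrable f)
    (hK : ∀ y, |f y| ≤ K) (hK0 : 0 < K) (hβ0 : 0 < β) (hβ1 : β ≤ 1) :
    ∀ᵐ x, DifferentiableAt ℝ (MB β f) x := by
  rcases eq_or_ne f 0 with rfl | hne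
  · have hMB : MB β 0 = 0 := funext (MB_zero β)
    exact Eventually.of_forall fun _ => by rw [hMB]; exact differentiableAt_const _
  obtain ⟨y₀, hy₀⟩ := Function.ne_iff.mp hne
  choose C hC using fun n : ℕ =>
    exists_lipschitzWith_max_MB hf hK hK0 hβ0 hβ1 (Nat.one_div_pos_of_nat (n := n) (α := ℝ))
  filter_upwards [ae_all_iff.2 fun n => (hC n).ae_differentiableAt] with x hx
  obtain ⟨n, hn⟩ := exists_nat_one_div_lt
    (MB_pos hcont (bddAbove_fracAvgSet hf hK hβ0.le hβ1 x) hy₀)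
  have hnear : ∀ᶠ y in 𝓝 x, 1 / ((n : ℝ) + 1) < max (1 / ((n : ℝ) + 1)) (MB β f y) :=
    ((hC n).continuous.tendsto x).eventually_const_lt (lt_max_of_lt_right hn)
  refine (hx n).congr_of_eventuallyEq (hnear.mono fun y hy => ?_)
  exact (max_eq_right ((lt_max_iff.mp hy).resolve_left (lt_irrefl _)).le).symm

theorem hasDerivAt_fracAvg_translate (hcont : Continuous f) (hr : 0 < r) (x : ℝ) :
    HasDerivAt (fun t => fracAvg β f (z + (t - x)) r)
      (r ^ β * ((2 * r)⁻¹ * (|f (z + r)| - |f (z - r)|))) x := by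
  set P : ℝ → ℝ := fun u => ∫ y in (0 : ℝ)..u, |f y|
  have hend : ∀ a, HasDerivAt (fun t => P (t + (a - x))) |f a| x := fun a =>
    HasDerivAt.comp_add_const x (a - x) <| by
      rw [add_sub_cancel]; exact (hcont.abs.integral_hasStrictDerivAt 0 a).hasDerivAt
  have heq : ∀ t, fracAvg β f (z + (t - x)) r =
      r ^ β * ((2 * r)⁻¹ * (P (t + (z + r - x)) - P (t + (z - r - x)))) := fun t => by
    rw [fracAvg, integral_Icc_eq_intervalIntegral (by linarith),
      intervalIntegral.integral_interval_sub_left (hcont.abs.intervalIntegrable _ _)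
        (hcont.abs.intervalIntegrable _ _)]
    ring_nf
  exact (((hend _).sub (hend _)).const_mul _ |>.const_mul _).congr_of_eventuallyEq
    (Eventually.of_forall heq)

theorem deriv_MB_of_goodBall (hcont : Continuous f) (hbdd : ∀ x, BddAbove (fracAvgSet β f x))
    {x : ℝ} (hx : DifferentiableAt ℝ (MB β f) x) (hball : GoodBall β f x z r) :
    deriv (MB β f) x = r ^ β * ((2 * r)⁻¹ * (|f (z + r)| - |f (z - r)|)) := by
  obtain ⟨hr, hxz, hgood⟩ := hball
  refine hx.hasDerivAt.eq_of_eventually_le_of_eq (hasDerivAt_fracAvg_translate hcont hr x)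
    (Eventually.of_forall fun t => fracAvg_le_MB (hbdd t) hr ?_) ?_
  · constructor <;> linarith [hxz.1, hxz.2]
  · rw [sub_self, add_zero]
    exact hgood.symm

end FractionalMaximal

theorem statement2
    (β : ℝ) (hβ0 : 0 < β) (hβ1 : β < 1)
    (f f' F' : ℝ → ℝ) (hf : W11 f f') (hF : W11 (fun x => |f x|) F') :
    ∀ᵐ x ∂(volume : Measure ℝ), ∀ z r : ℝ, GoodBall β f x z r →
      deriv (MB β f) x = r ^ β * ((2 * r)⁻¹ * ∫ y in Set.Icc (z - r) (z + r), F' y) := by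
  obtain ⟨K, hK0, hK⟩ := hf.exists_abs_le
  have hbdd := bddAbove_fracAvgSet (β := β) hf.1 hK hβ0.le hβ1.le
  filter_upwards [ae_differentiableAt_MB hf.continuous hf.1 hK hK0 hβ0 hβ1.le]
    with x hx z r hball
  rw [hF.integral_Icc_eq_sub (by linarith [hball.1]),
    deriv_MB_of_goodBall hf.continuous hbdd hx hball]
end

section
/- Let 0 < β < 1, f ∈ W^{1,1}(ℝ) with f ≠ 0, K ⊂ ℝ compact, C_K = min_{x∈K} M̃_β f(x) > 0 and C̄_K = max_{x∈K} M̃ f(x) > 0. If g ∈ W^{1,1}(ℝ) satisfies ‖M̃_β g − M̃_β f‖_∞ ≤ C_K/2 and ‖M̃ g − M̃ f‖_∞ ≤ C̄_K/2, then every good radius r for g at a point x ∈ K satisfies r ≥ (C_K/(3 C̄_K))^{1/β}. -/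
open MeasureTheory Filter Topology Set

/-! On a good ball `B` of radius `r`, `C_K / 2 ≤ M̃_β g(x) = r^β ⨍_B |g|`, while
`⨍_B |g| ≤ M̃ g(x) ≤ 3 C̄_K / 2`. The middle inequality needs `M̃ g(x)` to be a genuine
supremum (`sSup` of an unbounded set is `0`), which holds because a `W^{1,1}` function is bounded. -/

theorem W11.abs_le {g g' : ℝ → ℝ} (hg : W11 g g') (y : ℝ) :
    |g y| ≤ |g 0| + ∫ t, |g' t| := by
  have h_int_le : |∫ t in (0:ℝ)..y, g' t| ≤ ∫ t, |g' t| :=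
    calc |∫ t in (0:ℝ)..y, g' t| ≤ ∫ t in uIoc 0 y, |g' t| :=
          intervalIntegral.norm_integral_le_integral_norm_uIoc (f := g')
      _ ≤ ∫ t, |g' t| :=
          setIntegral_le_integral hg.2.1.abs (.of_forall fun _ => abs_nonneg _)
  calc |g y| = |g 0 + ∫ t in (0:ℝ)..y, g' t| := by rw [← hg.2.2 y]
    _ ≤ |g 0| + |∫ t in (0:ℝ)..y, g' t| := abs_add_le _ _
    _ ≤ |g 0| + ∫ t, |g' t| := by gcongr

theorem average_abs_Icc_le {g : ℝ → ℝ} {C : ℝ} (hg : Integrable g) (hC : ∀ y, |g y| ≤ C)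
    {z r : ℝ} (hr : 0 < r) :
    (2 * r)⁻¹ * ∫ y in Icc (z - r) (z + r), |g y| ≤ C := by
  have h_int : ∫ y in Icc (z - r) (z + r), |g y| ≤ C * (2 * r) :=
    calc ∫ y in Icc (z - r) (z + r), |g y| ≤ ∫ _ in Icc (z - r) (z + r), C :=
          setIntegral_mono_on hg.abs.integrableOn (integrableOn_const measure_Icc_lt_top.ne)
            measurableSet_Icc fun y _ => hC y
      _ = C * (2 * r) := by
          rw [setIntegral_const, smul_eq_mul, Real.volume_real_Icc_of_le (by linarith)]
          ring
  rwa [inv_mul_le_iff₀ (by positivity), mul_comm]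

theorem le_MB_of_forall_le {β : ℝ} {g : ℝ → ℝ} {x C : ℝ}
    (hC : ∀ z r, 0 < r → x ∈ Icc (z - r) (z + r) →
      r ^ β * ((2 * r)⁻¹ * ∫ y in Icc (z - r) (z + r), |g y|) ≤ C)
    {z r : ℝ} (hr : 0 < r) (hx : x ∈ Icc (z - r) (z + r)) :
    r ^ β * ((2 * r)⁻¹ * ∫ y in Icc (z - r) (z + r), |g y|) ≤ MB β g x :=
  le_csSup ⟨C, by rintro c ⟨z', r', hr', hx', rfl⟩; exact hC z' r' hr' hx'⟩ ⟨z, r, hr, hx, rfl⟩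

theorem W11.average_abs_Icc_le_MB_zero {g g' : ℝ → ℝ} (hg : W11 g g') {x z r : ℝ} (hr : 0 < r)
    (hx : x ∈ Icc (z - r) (z + r)) :
    (2 * r)⁻¹ * ∫ y in Icc (z - r) (z + r), |g y| ≤ MB 0 g x := by
  have h := le_MB_of_forall_le (β := 0) (fun _ _ hr' _ => by
    rw [Real.rpow_zero, one_mul]; exact average_abs_Icc_le hg.1 hg.abs_le hr') hr hx
  rwa [Real.rpow_zero, one_mul] at h

theorem statement5_general
    (β : ℝ) (hβ0 : 0 < β)
    (f g g' : ℝ → ℝ) (hg : W11 g g')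
    (K : Set ℝ)
    (CK CbK : ℝ)
    (hCK : IsLeast ((fun x => MB β f x) '' K) CK) (hCKpos : 0 < CK)
    (hCb : IsGreatest ((fun x => MB 0 f x) '' K) CbK) (hCbpos : 0 < CbK)
    (hg1 : ∀ x : ℝ, |MB β g x - MB β f x| ≤ CK / 2)
    (hg2 : ∀ x : ℝ, |MB 0 g x - MB 0 f x| ≤ CbK / 2) :
    ∀ x ∈ K, ∀ z r : ℝ, GoodBall β g x z r → (CK / (3 * CbK)) ^ (1 / β) ≤ r := by
  rintro x hx z r ⟨hr, hxB, hgood⟩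
  set avg := (2 * r)⁻¹ * ∫ y in Icc (z - r) (z + r), |g y|
  have h_lower : CK / 2 ≤ r ^ β * avg := by
    rw [← hgood]
    linarith [hCK.2 ⟨x, hx, rfl⟩, (abs_le.1 (hg1 x)).1]
  have h_upper : avg ≤ 3 / 2 * CbK := by
    linarith [hg.average_abs_Icc_le_MB_zero hr hxB, hCb.2 ⟨x, hx, rfl⟩, (abs_le.1 (hg2 x)).2]
  have h_rpow : CK / (3 * CbK) ≤ r ^ β := by
    rw [div_le_iff₀ (by positivity)]
    nlinarith [Real.rpow_nonneg hr.le β]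
  rwa [one_div, Real.rpow_inv_le_iff_of_pos (by positivity) hr.le hβ0]

theorem statement5
    (β : ℝ) (hβ0 : 0 < β) (hβ1 : β < 1)
    (f f' g g' : ℝ → ℝ) (hf : W11 f f') (hf0 : f ≠ 0) (hg : W11 g g')
    (K : Set ℝ) (hK : IsCompact K) (hKne : K.Nonempty)
    (CK CbK : ℝ)
    (hCK : IsLeast ((fun x => MB β f x) '' K) CK) (hCKpos : 0 < CK)
    (hCb : IsGreatest ((fun x => MB 0 f x) '' K) CbK) (hCbpos : 0 < CbK)
    (hg1 : ∀ x : ℝ, |MB β g x - MB β f x| ≤ CK / 2)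
    (hg2 : ∀ x : ℝ, |MB 0 g x - MB 0 f x| ≤ CbK / 2) :
    ∀ x ∈ K, ∀ z r : ℝ, GoodBall β g x z r → (CK / (3 * CbK)) ^ (1 / β) ≤ r :=
  statement5_general β hβ0 f g g' hg K CK CbK hCK hCKpos hCb hCbpos hg1 hg2
end
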